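/- arXiv:2407.11029 — 5 statements merged into one kernel-verified Lean document; each statement's English description precedes it below -/
import Mathlib

section
/- (Exact Kernel Ensemble Representation.) Suppose additionally that the initial model output is constant: there is b ∈ ℝ with f(w_0, x) = b for all x ∈ ℝ^d. Then for every test point x ∈ ℝ^d the trained model prediction has the exact ensemble-of-kernel-machines representation f(w_S, x) = b + Σ_{s=0}^{S−1} Σ_{i=1}^N a_{i,s} K_EPK(x, x_i, s), where a_{i,s} = −ε L'(f(w_s, x_i), y_i) and K_EPK(x, x', s) = ∫₀¹ ⟨∇_w f(w_s(t), x), ∇_w f(w_s, x')⟩ dt. -/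
/-! Telescope `f (w S) x - f (w 0) x` over the steps. By the fundamental theorem of calculus
along the segment from `w s` to `w (s + 1)`, each increment is `∫₀¹ ⟪∇f, w (s + 1) - w s⟫ dt`,
and the update rule makes `w (s + 1) - w s` a linear combination of the `∇f (w s, X i)`. -/

open scoped RealInnerProductSpace

section GradientAlongSegment

variable {E : Type*} [NormedAddCommGroup E] [InnerProductSpace ℝ E] [CompleteSpace E]
  {g : E → ℝ} {g' : E → E}

theorem integral_inner_gradient_segment (hg : ∀ w, HasGradientAt g (g' w) w)
    (hg' : Continuous g') (w v : E) :
    ∫ t in (0:ℝ)..1, ⟪g' (w + t • v), v⟫ = g (w + v) - g w := by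
  have hderiv : ∀ t ∈ Set.uIcc (0:ℝ) 1,
      HasDerivAt (fun t : ℝ => g (w + t • v)) ⟪g' (w + t • v), v⟫ t := by
    intro t _
    have hline : HasDerivAt (fun t : ℝ => w + t • v) v t := by
      simpa using ((hasDerivAt_id t).smul_const v).const_add w
    have hcomp := (hg (w + t • v)).hasFDerivAt.comp_hasDerivAt t hline
    simp only [InnerProductSpace.toDual_apply_apply] at hcomp
    exact hcomp
  have hcont : Continuous fun t : ℝ => ⟪g' (w + t • v), v⟫ := by fun_prop
  simpa using intervalIntegral.integral_eq_sub_of_hasDerivAt hderiv (hcont.intervalIntegrable 0 1)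

theorem sub_eq_sum_mul_integral_inner_gradient {ι : Type*} (hg : ∀ w, HasGradientAt g (g' w) w)
    (hg' : Continuous g') (w : E) (s : Finset ι) (c : ι → ℝ) (v : ι → E) :
    g (w + ∑ i ∈ s, c i • v i) - g w =
      ∑ i ∈ s, c i * ∫ t in (0:ℝ)..1, ⟪g' (w + t • ∑ j ∈ s, c j • v j), v i⟫ := by
  rw [← integral_inner_gradient_segment hg hg']
  simp_rw [inner_sum, inner_smul_right]
  rw [intervalIntegral.integral_finsetSum fun i _ =>
    (by fun_prop : Continuous _).intervalIntegrable 0 1]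
  simp_rw [intervalIntegral.integral_const_mul]

end GradientAlongSegment

theorem exact_kernel_ensemble_representation_general
    (M d N S : ℕ)
    (f : EuclideanSpace ℝ (Fin M) → EuclideanSpace ℝ (Fin d) → ℝ)
    (grad : EuclideanSpace ℝ (Fin M) → EuclideanSpace ℝ (Fin d) → EuclideanSpace ℝ (Fin M))
    (hgrad : ∀ (x : EuclideanSpace ℝ (Fin d)) (w : EuclideanSpace ℝ (Fin M)),
      HasGradientAt (fun w' => f w' x) (grad w x) w)
    (hgradCont : ∀ x : EuclideanSpace ℝ (Fin d), Continuous fun w => grad w x)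
    (X : Fin N → EuclideanSpace ℝ (Fin d)) (Y : Fin N → ℝ)
    (L' : ℝ → ℝ → ℝ)
    (ε : ℝ)
    (w : ℕ → EuclideanSpace ℝ (Fin M))
    (hupdate : ∀ s : ℕ,
      w (s + 1) = w s - ε • ∑ i, L' (f (w s) (X i)) (Y i) • grad (w s) (X i))
    (b : ℝ) (hb : ∀ x : EuclideanSpace ℝ (Fin d), f (w 0) x = b) :
    ∀ x : EuclideanSpace ℝ (Fin d),
      f (w S) x =
        b + ∑ s ∈ Finset.range S, ∑ i,
          (-ε * L' (f (w s) (X i)) (Y i)) *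
            ∫ t in (0:ℝ)..1, ⟪grad (w s + t • (w (s + 1) - w s)) x, grad (w s) (X i)⟫ := by
  intro x
  have hstep : ∀ s, w (s + 1) - w s = ∑ i, (-ε * L' (f (w s) (X i)) (Y i)) • grad (w s) (X i) := by
    intro s
    simp_rw [hupdate s, sub_sub_cancel_left, Finset.smul_sum, ← Finset.sum_neg_distrib, mul_smul,
      neg_smul]
  rw [← hb x, ← sub_eq_iff_eq_add', ← Finset.sum_range_sub (fun s => f (w s) x)]
  refine Finset.sum_congr rfl fun s _ => ?_
  have hincrement := sub_eq_sum_mul_integral_inner_gradient (hgrad x) (hgradCont x) (w s)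
    Finset.univ (fun i => -ε * L' (f (w s) (X i)) (Y i)) (fun i => grad (w s) (X i))
  rwa [← hstep s, add_sub_cancel] at hincrement

/-- **Exact Kernel Ensemble Representation.** If the initial model output is constant,
`f(w_0, x) = b` for all `x`, then the trained prediction is exactly an ensemble of kernel
machines: `f(w_S, x) = b + Σ_{s<S} Σ_i a_{i,s} K_EPK(x, x_i, s)` where
`a_{i,s} = −ε L'(f(w_s, x_i), y_i)` and
`K_EPK(x, x', s) = ∫₀¹ ⟨∇_w f(w_s(t), x), ∇_w f(w_s, x')⟩ dt`. -/
theorem exact_kernel_ensemble_representation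
    (M d N S : ℕ)
    (f : EuclideanSpace ℝ (Fin M) → EuclideanSpace ℝ (Fin d) → ℝ)
    (grad : EuclideanSpace ℝ (Fin M) → EuclideanSpace ℝ (Fin d) → EuclideanSpace ℝ (Fin M))
    (hgrad : ∀ (x : EuclideanSpace ℝ (Fin d)) (w : EuclideanSpace ℝ (Fin M)),
      HasGradientAt (fun w' => f w' x) (grad w x) w)
    (hgradCont : ∀ x : EuclideanSpace ℝ (Fin d), Continuous fun w => grad w x)
    (X : Fin N → EuclideanSpace ℝ (Fin d)) (Y : Fin N → ℝ)
    (L L' : ℝ → ℝ → ℝ)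
    (hL : ∀ a b : ℝ, HasDerivAt (fun a' => L a' b) (L' a b) a)
    (ε : ℝ) (hε : 0 < ε)
    (w : ℕ → EuclideanSpace ℝ (Fin M))
    (hupdate : ∀ s : ℕ,
      w (s + 1) = w s - ε • ∑ i, L' (f (w s) (X i)) (Y i) • grad (w s) (X i))
    (b : ℝ) (hb : ∀ x : EuclideanSpace ℝ (Fin d), f (w 0) x = b) :
    ∀ x : EuclideanSpace ℝ (Fin d),
      f (w S) x =
        b + ∑ s ∈ Finset.range S, ∑ i,
          (-ε * L' (f (w s) (X i)) (Y i)) *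
            ∫ t in (0:ℝ)..1, ⟪grad (w s + t • (w (s + 1) - w s)) x, grad (w s) (X i)⟫ :=
  exact_kernel_ensemble_representation_general M d N S f grad hgrad hgradCont X Y L' ε w hupdate b
    hb
end

section
/- (Exact Kernel Machine Reduction.) Suppose the initial model output is constant, f(w_0, x) = b for all x, and that the loss derivatives do not change across training steps: L'(f(w_s, x_i), y_i) = L'(f(w_0, x_i), y_i) for all steps s and all i. Then the ensemble representation reduces exactly to a single kernel machine: for every x ∈ ℝ^d, f(w_S, x) = b + Σ_{i=1}^N a_{i,0} K(x, x_i), where a_{i,0} = −ε L'(f(w_0, x_i), y_i) and K(x, x') = Σ_{s=0}^{S−1} ∫₀¹ ⟨∇_w f(w_s(t), x), ∇_w f(w_s, x')⟩ dt. -/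
open scoped RealInnerProductSpace
open MeasureTheory

/-!
Each gradient-descent step moves the parameters along a segment, so by the fundamental theorem of
calculus the change of `f(·, x)` over step `s` is `∫₀¹ ⟨∇_w f(w_s(t), x), w_{s+1} − w_s⟩ dt`.
The step is `Σ_i a_{i,s} ∇_w f(w_s, x_i)`, and since the coefficients `a_{i,s} = a_{i,0}` do not
depend on `s`, they factor out of the integral and of the sum over steps; telescoping from the
constant `f(w_0, ·) = b` gives the single kernel machine.
-/

section

variable {E : Type*} [NormedAddCommGroup E] [InnerProductSpace ℝ E]

theorem HasGradientAt.hasDerivAt_comp_add_smul [CompleteSpace E] {F : E → ℝ} {g a v : E} {t : ℝ}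
    (h : HasGradientAt F g (a + t • v)) :
    HasDerivAt (fun t : ℝ => F (a + t • v)) ⟪g, v⟫ t := by
  have hline : HasDerivAt (fun t : ℝ => a + t • v) v t := by
    simpa using ((hasDerivAt_id t).smul_const v).const_add a
  exact h.hasFDerivAt.comp_hasDerivAt t hline

theorem integral_inner_gradient_segment_eq_sub [CompleteSpace E] {F : E → ℝ} {g : E → E}
    (hF : ∀ w, HasGradientAt F (g w) w) (hg : Continuous g) (a v : E) :
    ∫ t in (0:ℝ)..1, ⟪g (a + t • v), v⟫ = F (a + v) - F a := by
  have hint : IntervalIntegrable (fun t : ℝ => ⟪g (a + t • v), v⟫) volume 0 1 :=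
    (by fun_prop : Continuous fun t : ℝ => ⟪g (a + t • v), v⟫).intervalIntegrable 0 1
  rw [intervalIntegral.integral_eq_sub_of_hasDerivAt
    (fun t _ => (hF (a + t • v)).hasDerivAt_comp_add_smul) hint]
  simp

theorem intervalIntegral.integral_inner_sum_smul {ι : Type*} {G : ℝ → E} (hG : Continuous G)
    (s : Finset ι) (c : ι → ℝ) (u : ι → E) (a b : ℝ) :
    ∫ t in a..b, ⟪G t, ∑ i ∈ s, c i • u i⟫ = ∑ i ∈ s, c i * ∫ t in a..b, ⟪G t, u i⟫ := by
  simp only [inner_sum, real_inner_smul_right]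
  rw [intervalIntegral.integral_finsetSum fun i _ =>
    (by fun_prop : Continuous fun t => c i * ⟪G t, u i⟫).intervalIntegrable a b]
  simp only [intervalIntegral.integral_const_mul]

theorem sub_eq_sum_smul_of_eq_sub_smul_sum {ι : Type*} {s : Finset ι} {w w' : E} {ε : ℝ}
    {c : ι → ℝ} {u : ι → E} (h : w' = w - ε • ∑ i ∈ s, c i • u i) :
    w' - w = ∑ i ∈ s, (-ε * c i) • u i := by
  simp only [h, sub_sub_cancel_left, Finset.smul_sum, smul_smul, ← Finset.sum_neg_distrib,
    neg_mul, neg_smul]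

end

theorem exact_kernel_machine_reduction_general
    (M d N S : ℕ)
    (f : EuclideanSpace ℝ (Fin M) → EuclideanSpace ℝ (Fin d) → ℝ)
    (grad : EuclideanSpace ℝ (Fin M) → EuclideanSpace ℝ (Fin d) → EuclideanSpace ℝ (Fin M))
    (hgrad : ∀ (x : EuclideanSpace ℝ (Fin d)) (w : EuclideanSpace ℝ (Fin M)),
      HasGradientAt (fun w' => f w' x) (grad w x) w)
    (hgradCont : ∀ x : EuclideanSpace ℝ (Fin d), Continuous fun w => grad w x)
    (X : Fin N → EuclideanSpace ℝ (Fin d)) (Y : Fin N → ℝ)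
    (L' : ℝ → ℝ → ℝ)
    (ε : ℝ)
    (w : ℕ → EuclideanSpace ℝ (Fin M))
    (hupdate : ∀ s : ℕ,
      w (s + 1) = w s - ε • ∑ i, L' (f (w s) (X i)) (Y i) • grad (w s) (X i))
    (b : ℝ) (hb : ∀ x : EuclideanSpace ℝ (Fin d), f (w 0) x = b)
    (hconst : ∀ s : ℕ, s < S → ∀ i : Fin N,
      L' (f (w s) (X i)) (Y i) = L' (f (w 0) (X i)) (Y i)) :
    ∀ x : EuclideanSpace ℝ (Fin d),
      f (w S) x =
        b + ∑ i,
          (-ε * L' (f (w 0) (X i)) (Y i)) *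
            ∑ s ∈ Finset.range S,
              ∫ t in (0:ℝ)..1, ⟪grad (w s + t • (w (s + 1) - w s)) x, grad (w s) (X i)⟫ := by
  intro x
  have hstep : ∀ s ∈ Finset.range S,
      w (s + 1) - w s = ∑ i, (-ε * L' (f (w 0) (X i)) (Y i)) • grad (w s) (X i) := by
    intro s hs
    rw [sub_eq_sum_smul_of_eq_sub_smul_sum (hupdate s)]
    simp only [hconst s (Finset.mem_range.mp hs)]
  have hincrement : ∀ s ∈ Finset.range S, f (w (s + 1)) x - f (w s) x =
      ∑ i, (-ε * L' (f (w 0) (X i)) (Y i)) *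
        ∫ t in (0:ℝ)..1, ⟪grad (w s + t • (w (s + 1) - w s)) x, grad (w s) (X i)⟫ := by
    intro s hs
    have hftc := integral_inner_gradient_segment_eq_sub (hgrad x) (hgradCont x) (w s)
      (w (s + 1) - w s)
    rw [add_sub_cancel] at hftc
    rw [← hftc, ← intervalIntegral.integral_inner_sum_smul
      (G := fun t : ℝ => grad (w s + t • (w (s + 1) - w s)) x) ((hgradCont x).comp (by fun_prop)),
      ← hstep s hs]
  calc f (w S) x = f (w 0) x + ∑ s ∈ Finset.range S, (f (w (s + 1)) x - f (w s) x) := by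
        rw [Finset.sum_range_sub (fun s => f (w s) x)]; ring
    _ = _ := by
        rw [hb, Finset.sum_congr rfl hincrement, Finset.sum_comm]
        simp only [Finset.mul_sum]

/-- **Exact Kernel Machine Reduction.** If the initial model output is constant and the loss
derivatives do not change across training steps, then the ensemble representation reduces to a
single kernel machine: `f(w_S, x) = b + Σ_i a_{i,0} K(x, x_i)` with
`a_{i,0} = −ε L'(f(w_0, x_i), y_i)` and
`K(x, x') = Σ_{s<S} ∫₀¹ ⟨∇_w f(w_s(t), x), ∇_w f(w_s, x')⟩ dt`. -/
theorem exact_kernel_machine_reduction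
    (M d N S : ℕ)
    (f : EuclideanSpace ℝ (Fin M) → EuclideanSpace ℝ (Fin d) → ℝ)
    (grad : EuclideanSpace ℝ (Fin M) → EuclideanSpace ℝ (Fin d) → EuclideanSpace ℝ (Fin M))
    (hgrad : ∀ (x : EuclideanSpace ℝ (Fin d)) (w : EuclideanSpace ℝ (Fin M)),
      HasGradientAt (fun w' => f w' x) (grad w x) w)
    (hgradCont : ∀ x : EuclideanSpace ℝ (Fin d), Continuous fun w => grad w x)
    (X : Fin N → EuclideanSpace ℝ (Fin d)) (Y : Fin N → ℝ)
    (L L' : ℝ → ℝ → ℝ)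
    (hL : ∀ a b : ℝ, HasDerivAt (fun a' => L a' b) (L' a b) a)
    (ε : ℝ) (hε : 0 < ε)
    (w : ℕ → EuclideanSpace ℝ (Fin M))
    (hupdate : ∀ s : ℕ,
      w (s + 1) = w s - ε • ∑ i, L' (f (w s) (X i)) (Y i) • grad (w s) (X i))
    (b : ℝ) (hb : ∀ x : EuclideanSpace ℝ (Fin d), f (w 0) x = b)
    (hconst : ∀ s : ℕ, s < S → ∀ i : Fin N,
      L' (f (w s) (X i)) (Y i) = L' (f (w 0) (X i)) (Y i)) :
    ∀ x : EuclideanSpace ℝ (Fin d),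
      f (w S) x =
        b + ∑ i,
          (-ε * L' (f (w 0) (X i)) (Y i)) *
            ∑ s ∈ Finset.range S,
              ∫ t in (0:ℝ)..1, ⟪grad (w s + t • (w (s + 1) - w s)) x, grad (w s) (X i)⟫ :=
  exact_kernel_machine_reduction_general M d N S f grad hgrad hgradCont X Y L' ε w hupdate b hb
    hconst
end

section
/- (Generalized Exact Path Kernel representation.) For every test point x ∈ ℝ^d, the trained model prediction decomposes exactly into the initial prediction plus a learned adjustment over all training steps and all training points: f(w_S, x) = f(w_0, x) − ε Σ_{s=0}^{S−1} Σ_{i=1}^N L'(f(w_s, x_i), y_i) ∫₀¹ ⟨∇_w f(w_s(t), x), ∇_w f(w_s, x_i)⟩ dt. No assumption on the initial output f(w_0, ·) is required. -/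
/-!
Along the straight segment from `w_s` to `w_{s+1}` the fundamental theorem of calculus gives
`f(w_{s+1}, x) - f(w_s, x) = ⟪∫₀¹ ∇_w f(w_s(t), x) dt, w_{s+1} - w_s⟫`. Substituting the gradient
descent update for `w_{s+1} - w_s` and pulling the finite sum and the scalars out of the inner
product and the integral expresses each step's change as the path-kernel term; summing over the
steps telescopes to the claim.
-/

open scoped RealInnerProductSpace
open MeasureTheory

variable {E : Type*} [NormedAddCommGroup E] [InnerProductSpace ℝ E] [CompleteSpace E]

theorem inner_intervalIntegral_left {μ : Measure ℝ} {u : ℝ → E} {a b : ℝ}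
    (hu : IntervalIntegrable u μ a b) (v : E) :
    ⟪∫ t in a..b, u t ∂μ, v⟫ = ∫ t in a..b, ⟪u t, v⟫ ∂μ := by
  simpa only [innerSL_apply_apply, real_inner_comm v] using
    ((innerSL ℝ v).intervalIntegral_comp_comm hu).symm

theorem sub_eq_integral_inner_gradient_segment {F : E → ℝ} {g : E → E}
    (hF : ∀ w, HasGradientAt F (g w) w) (hg : Continuous g) (a b : E) :
    F b - F a = ∫ t in (0:ℝ)..1, ⟪g (a + t • (b - a)), b - a⟫ := by
  have hderiv (t : ℝ) :
      HasDerivAt (fun t : ℝ => F (a + t • (b - a))) ⟪g (a + t • (b - a)), b - a⟫ t := by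
    have hpath : HasDerivAt (fun t : ℝ => a + t • (b - a)) (b - a) t := by
      simpa using ((hasDerivAt_id t).smul_const (b - a)).const_add a
    have h := (hF _).hasFDerivAt.comp_hasDerivAt t hpath
    simp only [InnerProductSpace.toDual_apply_apply] at h
    exact h
  have hcont : Continuous fun t : ℝ => ⟪g (a + t • (b - a)), b - a⟫ := by fun_prop
  simpa using (intervalIntegral.integral_eq_sub_of_hasDerivAt (fun t _ => hderiv t)
    (hcont.intervalIntegrable 0 1)).symm

theorem sub_eq_neg_mul_sum_integral_inner_of_eq_sub_smul_sum {F : E → ℝ}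
    {g : E → E} (hF : ∀ w, HasGradientAt F (g w) w) (hg : Continuous g) {ι : Type*}
    {s : Finset ι} {c : ι → ℝ} {v : ι → E} {η : ℝ} {a b : E}
    (hb : b = a - η • ∑ i ∈ s, c i • v i) :
    F b - F a = -(η * ∑ i ∈ s, c i * ∫ t in (0:ℝ)..1, ⟪g (a + t • (b - a)), v i⟫) := by
  have hint : IntervalIntegrable (fun t : ℝ => g (a + t • (b - a))) volume 0 1 :=
    Continuous.intervalIntegrable (by fun_prop) 0 1
  have hΔ : b - a = -(η • ∑ i ∈ s, c i • v i) := by rw [hb]; abel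
  calc F b - F a = ⟪∫ t in (0:ℝ)..1, g (a + t • (b - a)), b - a⟫ := by
        rw [sub_eq_integral_inner_gradient_segment hF hg, inner_intervalIntegral_left hint]
    _ = ⟪∫ t in (0:ℝ)..1, g (a + t • (b - a)), -(η • ∑ i ∈ s, c i • v i)⟫ := by
        rw [← hΔ]
    _ = _ := by
        rw [inner_neg_right, inner_smul_right, inner_sum]
        simp_rw [real_inner_smul_right, inner_intervalIntegral_left hint]

theorem generalized_exact_path_kernel_general
    (M d N S : ℕ)
    (f : EuclideanSpace ℝ (Fin M) → EuclideanSpace ℝ (Fin d) → ℝ)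
    (grad : EuclideanSpace ℝ (Fin M) → EuclideanSpace ℝ (Fin d) → EuclideanSpace ℝ (Fin M))
    (hgrad : ∀ (x : EuclideanSpace ℝ (Fin d)) (w : EuclideanSpace ℝ (Fin M)),
      HasGradientAt (fun w' => f w' x) (grad w x) w)
    (hgradCont : ∀ x : EuclideanSpace ℝ (Fin d), Continuous fun w => grad w x)
    (X : Fin N → EuclideanSpace ℝ (Fin d)) (Y : Fin N → ℝ)
    (L' : ℝ → ℝ → ℝ)
    (ε : ℝ)
    (w : ℕ → EuclideanSpace ℝ (Fin M))
    (hupdate : ∀ s : ℕ,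
      w (s + 1) = w s - ε • ∑ i, L' (f (w s) (X i)) (Y i) • grad (w s) (X i)) :
    ∀ x : EuclideanSpace ℝ (Fin d),
      f (w S) x =
        f (w 0) x -
          ε * ∑ s ∈ Finset.range S, ∑ i,
            L' (f (w s) (X i)) (Y i) *
              ∫ t in (0:ℝ)..1, ⟪grad (w s + t • (w (s + 1) - w s)) x, grad (w s) (X i)⟫ := by
  intro x
  have htelescope := Finset.sum_range_sub (fun s => f (w s) x) S
  simp only [sub_eq_neg_mul_sum_integral_inner_of_eq_sub_smul_sum (hgrad x) (hgradCont x)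
    (hupdate _), Finset.sum_neg_distrib, ← Finset.mul_sum] at htelescope
  linarith

/-- **Generalized Exact Path Kernel representation.** For every test point `x`, the trained
prediction decomposes exactly into the initial prediction plus a learned adjustment:
`f(w_S, x) = f(w_0, x) − ε Σ_{s<S} Σ_i L'(f(w_s, x_i), y_i)
  ∫₀¹ ⟨∇_w f(w_s(t), x), ∇_w f(w_s, x_i)⟩ dt`.
No assumption on the initial output `f(w_0, ·)` is required. -/
theorem generalized_exact_path_kernel
    (M d N S : ℕ)
    (f : EuclideanSpace ℝ (Fin M) → EuclideanSpace ℝ (Fin d) → ℝ)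
    (grad : EuclideanSpace ℝ (Fin M) → EuclideanSpace ℝ (Fin d) → EuclideanSpace ℝ (Fin M))
    (hgrad : ∀ (x : EuclideanSpace ℝ (Fin d)) (w : EuclideanSpace ℝ (Fin M)),
      HasGradientAt (fun w' => f w' x) (grad w x) w)
    (hgradCont : ∀ x : EuclideanSpace ℝ (Fin d), Continuous fun w => grad w x)
    (X : Fin N → EuclideanSpace ℝ (Fin d)) (Y : Fin N → ℝ)
    (L L' : ℝ → ℝ → ℝ)
    (hL : ∀ a b : ℝ, HasDerivAt (fun a' => L a' b) (L' a b) a)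
    (ε : ℝ) (hε : 0 < ε)
    (w : ℕ → EuclideanSpace ℝ (Fin M))
    (hupdate : ∀ s : ℕ,
      w (s + 1) = w s - ε • ∑ i, L' (f (w s) (X i)) (Y i) • grad (w s) (X i)) :
    ∀ x : EuclideanSpace ℝ (Fin d),
      f (w S) x =
        f (w 0) x -
          ε * ∑ s ∈ Finset.range S, ∑ i,
            L' (f (w s) (X i)) (Y i) *
              ∫ t in (0:ℝ)..1, ⟪grad (w s + t • (w (s + 1) - w s)) x, grad (w s) (X i)⟫ :=
  generalized_exact_path_kernel_general M d N S f grad hgrad hgradCont X Y L' ε w hupdate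
end

section
/- (Prediction Spanning Vectors.) Let x ∈ ℝ^d be a test point whose parameter gradient along the training path is orthogonal to every training-point parameter gradient, i.e. ⟨∇_w f(w_s(t), x), ∇_w f(w_s, x_i)⟩ = 0 for all i ∈ {1, …, N}, all s ∈ {0, …, S−1}, and all t ∈ [0,1]. Then the learned adjustment at x vanishes: f(w_S, x) = f(w_0, x). Consequently, only the component of a test gradient lying in the span of the training gradients {∇_w f(w_s, x_i) : 1 ≤ i ≤ N, 0 ≤ s ≤ S−1} contributes to the trained prediction. -/
open scoped RealInnerProductSpace

/-!
Along the segment from `w s` to `w (s + 1)`, the derivative of `t ↦ f (w s + t • Δ) x` is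
`⟪∇_w f(w_s(t), x), Δ⟫`. The step `Δ` is a linear combination of the training gradients
`∇_w f(w_s, x_i)`, so the orthogonality hypothesis makes this derivative vanish on `[0, 1]`:
each step leaves the prediction at `x` unchanged, and the steps telescope.
-/

section

variable {F : Type*} [NormedAddCommGroup F] [InnerProductSpace ℝ F]

theorem inner_sum_smul_eq_zero {ι : Type*} (s : Finset ι) (u : F) (c : ι → ℝ) (v : ι → F)
    (h : ∀ i ∈ s, ⟪u, v i⟫ = 0) : ⟪u, ∑ i ∈ s, c i • v i⟫ = 0 := by
  rw [inner_sum]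
  exact Finset.sum_eq_zero fun i hi => by rw [inner_smul_right, h i hi, mul_zero]

variable [CompleteSpace F] in
theorem eq_of_hasGradientAt_segment_inner_eq_zero {φ : F → ℝ} {g : F → F} {a v : F}
    (hφ : ∀ t ∈ Set.Icc (0 : ℝ) 1, HasGradientAt φ (g (a + t • v)) (a + t • v))
    (horth : ∀ t ∈ Set.Icc (0 : ℝ) 1, ⟪g (a + t • v), v⟫ = 0) :
    φ (a + v) = φ a := by
  have hderiv : ∀ t ∈ Set.Icc (0 : ℝ) 1, HasDerivAt (fun t : ℝ => φ (a + t • v)) 0 t := by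
    intro t ht
    have hline : HasDerivAt (fun t : ℝ => a + t • v) v t := by
      simpa using ((hasDerivAt_id t).smul_const v).const_add a
    have h := (hφ t ht).hasFDerivAt.comp_hasDerivAt t hline
    simp only [InnerProductSpace.toDual_apply_apply, horth t ht] at h
    exact h
  have hconst := constant_of_has_deriv_right_zero
    (fun t ht => (hderiv t ht).continuousAt.continuousWithinAt)
    (fun t ht => (hderiv t (Set.Ico_subset_Icc_self ht)).hasDerivWithinAt) 1 (by simp)
  simpa using hconst

end

theorem prediction_spanning_vectors_general
    (M d N S : ℕ)
    (f : EuclideanSpace ℝ (Fin M) → EuclideanSpace ℝ (Fin d) → ℝ)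
    (grad : EuclideanSpace ℝ (Fin M) → EuclideanSpace ℝ (Fin d) → EuclideanSpace ℝ (Fin M))
    (hgrad : ∀ (x : EuclideanSpace ℝ (Fin d)) (w : EuclideanSpace ℝ (Fin M)),
      HasGradientAt (fun w' => f w' x) (grad w x) w)
    (X : Fin N → EuclideanSpace ℝ (Fin d)) (Y : Fin N → ℝ)
    (L' : ℝ → ℝ → ℝ)
    (ε : ℝ)
    (w : ℕ → EuclideanSpace ℝ (Fin M))
    (hupdate : ∀ s : ℕ,
      w (s + 1) = w s - ε • ∑ i, L' (f (w s) (X i)) (Y i) • grad (w s) (X i))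
    (x : EuclideanSpace ℝ (Fin d))
    (horth : ∀ (i : Fin N) (s : ℕ), s < S → ∀ t ∈ Set.Icc (0:ℝ) 1,
      ⟪grad (w s + t • (w (s + 1) - w s)) x, grad (w s) (X i)⟫ = 0) :
    f (w S) x = f (w 0) x := by
  rw [← sub_eq_zero, ← Finset.sum_range_sub (fun s => f (w s) x)]
  refine Finset.sum_eq_zero fun s hs => sub_eq_zero.mpr ?_
  have hstep : w (s + 1) - w s = -ε • ∑ i, L' (f (w s) (X i)) (Y i) • grad (w s) (X i) := by
    rw [hupdate s, neg_smul]; abel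
  have hflat := eq_of_hasGradientAt_segment_inner_eq_zero (φ := fun w' => f w' x)
    (g := fun w' => grad w' x) (a := w s) (v := w (s + 1) - w s)
    (fun t _ => hgrad x _) fun t ht => by
      rw [hstep, inner_smul_right,
        inner_sum_smul_eq_zero _ _ _ _ fun i _ => (hstep ▸ horth i s (Finset.mem_range.mp hs) t ht), mul_zero]
  simpa using hflat

/-- **Prediction Spanning Vectors.** If the parameter gradient of the test point `x` along the
training path is orthogonal to every training-point parameter gradient
(`⟨∇_w f(w_s(t), x), ∇_w f(w_s, x_i)⟩ = 0` for all `i`, all `s < S`, all `t ∈ [0,1]`),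
then the learned adjustment at `x` vanishes: `f(w_S, x) = f(w_0, x)`. -/
theorem prediction_spanning_vectors
    (M d N S : ℕ)
    (f : EuclideanSpace ℝ (Fin M) → EuclideanSpace ℝ (Fin d) → ℝ)
    (grad : EuclideanSpace ℝ (Fin M) → EuclideanSpace ℝ (Fin d) → EuclideanSpace ℝ (Fin M))
    (hgrad : ∀ (x : EuclideanSpace ℝ (Fin d)) (w : EuclideanSpace ℝ (Fin M)),
      HasGradientAt (fun w' => f w' x) (grad w x) w)
    (hgradCont : ∀ x : EuclideanSpace ℝ (Fin d), Continuous fun w => grad w x)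
    (X : Fin N → EuclideanSpace ℝ (Fin d)) (Y : Fin N → ℝ)
    (L L' : ℝ → ℝ → ℝ)
    (hL : ∀ a b : ℝ, HasDerivAt (fun a' => L a' b) (L' a b) a)
    (ε : ℝ) (hε : 0 < ε)
    (w : ℕ → EuclideanSpace ℝ (Fin M))
    (hupdate : ∀ s : ℕ,
      w (s + 1) = w s - ε • ∑ i, L' (f (w s) (X i)) (Y i) • grad (w s) (X i))
    (x : EuclideanSpace ℝ (Fin d))
    (horth : ∀ (i : Fin N) (s : ℕ), s < S → ∀ t ∈ Set.Icc (0:ℝ) 1,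
      ⟪grad (w s + t • (w (s + 1) - w s)) x, grad (w s) (X i)⟫ = 0) :
    f (w S) x = f (w 0) x :=
  prediction_spanning_vectors_general M d N S f grad hgrad X Y L' ε w hupdate x horth
end

section
/- (Gaussian annulus concentration.) Let x be a random vector in ℝ^n whose n coordinates are independent Gaussian random variables with mean 0 and variance σ². Then for every 0 ≤ ε ≤ √n, the Euclidean norm of x concentrates near σ√n: P[ |‖x‖₂ − σ√n| ≤ σε ] ≥ 1 − 2e^{−ε²/16}. -/
/-! Write `‖Z‖² = ∑ Zᵢ²`. Each `Zᵢ²` has mgf `E exp (t Zᵢ²) = (1 - 2tσ²)^{-1/2} ≤ exp (tσ² + 4t²σ⁴)`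
for `tσ² ≤ 1/4`, so by independence `‖Z‖²` satisfies a sub-Gaussian mgf bound around `nσ²` on that
range of `t`. Chernoff's bound at `t = ± ε / (8σ²√n)` then gives
`P(|‖Z‖² - nσ²| ≥ σ²ε√n) ≤ 2 exp (-ε²/16)`, and `|‖Z‖ - σ√n| > σε` forces this event since
`|‖Z‖² - nσ²| = |‖Z‖ - σ√n| (‖Z‖ + σ√n)`. -/

open MeasureTheory ProbabilityTheory Real
open scoped NNReal

lemma inv_sqrt_one_sub_two_mul_le_exp {u : ℝ} (hu : u ≤ 1 / 4) :
    (√(1 - 2 * u))⁻¹ ≤ exp (u + 4 * u ^ 2) := by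
  have hpos : 0 < 1 - 2 * u := by linarith
  have hlin : 1 ≤ (1 - 2 * u) * (2 * u + 8 * u ^ 2 + 1) := by nlinarith [sq_nonneg u]
  rw [← sqrt_inv, sqrt_le_iff, ← exp_nat_mul, Nat.cast_ofNat,
    show 2 * (u + 4 * u ^ 2) = 2 * u + 8 * u ^ 2 by ring, inv_le_iff_one_le_mul₀' hpos]
  exact ⟨(exp_pos _).le, hlin.trans (mul_le_mul_of_nonneg_left (add_one_le_exp _) hpos.le)⟩

lemma mul_le_abs_sq_sub_sq {r s δ : ℝ} (hr : 0 ≤ r) (hs : 0 ≤ s) (h : δ ≤ |r - s|) :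
    s * δ ≤ |r ^ 2 - s ^ 2| := by
  rw [sq_sub_sq, abs_mul, abs_of_nonneg (add_nonneg hr hs)]
  calc s * δ ≤ s * |r - s| := mul_le_mul_of_nonneg_left h hs
    _ ≤ (r + s) * |r - s| := mul_le_mul_of_nonneg_right (by linarith) (abs_nonneg _)

namespace ProbabilityTheory

variable {Ω : Type*} {mΩ : MeasurableSpace Ω} {μ : Measure Ω}

lemma mgf_fun_sq_gaussianReal {v : ℝ≥0} {t : ℝ} (ht : 2 * t * v < 1) :
    mgf (fun x ↦ x ^ 2) (gaussianReal 0 v) t = (√(1 - 2 * t * v))⁻¹ := by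
  rcases eq_or_ne v 0 with rfl | hv
  · simp [mgf, gaussianReal_zero_var]
  have hv' : (0 : ℝ) < v := by positivity
  have hdensity : ∀ x, gaussianPDFReal 0 v x • exp (t * x ^ 2)
      = (√(2 * π * v))⁻¹ * exp (-((1 - 2 * t * v) / (2 * v)) * x ^ 2) := fun x ↦ by
    rw [gaussianPDFReal, smul_eq_mul, mul_assoc, ← exp_add]
    congr 2
    field_simp
    ring
  rw [mgf, integral_gaussianReal_eq_integral_smul hv]
  simp_rw [hdensity]
  rw [integral_const_mul, integral_gaussian, ← sqrt_inv, ← sqrt_mul (by positivity), ← sqrt_inv]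
  congr 1
  field_simp

lemma one_sub_probReal_compl_le [IsProbabilityMeasure μ] (s : Set Ω) :
    1 - μ.real sᶜ ≤ μ.real s := by
  have := measureReal_union_le (μ := μ) s sᶜ
  rw [Set.union_compl_self, probReal_univ] at this
  linarith

section Chernoff

variable [IsFiniteMeasure μ] {X : Ω → ℝ} {m c a t : ℝ}

lemma measureReal_ge_add_le_exp_of_mgf_le (ht : 0 ≤ t)
    (hint : Integrable (fun ω ↦ exp (t * X ω)) μ) (hmgf : mgf X μ t ≤ exp (t * m + c * t ^ 2)) :
    μ.real {ω | m + a ≤ X ω} ≤ exp (-t * a + c * t ^ 2) :=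
  calc μ.real {ω | m + a ≤ X ω} ≤ exp (-t * (m + a)) * mgf X μ t :=
        measure_ge_le_exp_mul_mgf _ ht hint
    _ ≤ exp (-t * (m + a)) * exp (t * m + c * t ^ 2) := by gcongr
    _ = exp (-t * a + c * t ^ 2) := by rw [← exp_add]; ring_nf

lemma measureReal_le_sub_le_exp_of_mgf_le (ht : 0 ≤ t)
    (hint : Integrable (fun ω ↦ exp (-t * X ω)) μ)
    (hmgf : mgf X μ (-t) ≤ exp (-t * m + c * t ^ 2)) :
    μ.real {ω | X ω ≤ m - a} ≤ exp (-t * a + c * t ^ 2) :=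
  calc μ.real {ω | X ω ≤ m - a} ≤ exp (-(-t) * (m - a)) * mgf X μ (-t) :=
        measure_le_le_exp_mul_mgf _ (neg_nonpos.2 ht) hint
    _ ≤ exp (-(-t) * (m - a)) * exp (-t * m + c * t ^ 2) := by gcongr
    _ = exp (-t * a + c * t ^ 2) := by rw [← exp_add]; ring_nf

end Chernoff

section SumOfSquares

variable {ι : Type*} [Fintype ι] {X : ι → Ω → ℝ} {v : ℝ≥0} {t : ℝ}

lemma mgf_sq_of_map_eq_gaussianReal {Y : Ω → ℝ} (hY : μ.map Y = gaussianReal 0 v)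
    (ht : 2 * t * v < 1) : mgf (fun ω ↦ Y ω ^ 2) μ t = (√(1 - 2 * t * v))⁻¹ := by
  have hYm : AEMeasurable Y μ := aemeasurable_of_map_neZero (by rw [hY]; infer_instance)
  rw [← mgf_fun_sq_gaussianReal ht, ← hY, mgf_map hYm (by fun_prop)]
  rfl

lemma iIndepFun.mgf_sum_sq_gaussianReal (hindep : iIndepFun X μ)
    (hX : ∀ i, μ.map (X i) = gaussianReal 0 v) (ht : 2 * t * v < 1) :
    mgf (fun ω ↦ ∑ i, X i ω ^ 2) μ t = (√(1 - 2 * t * v))⁻¹ ^ Fintype.card ι := by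
  have hXm i : AEMeasurable (X i) μ := aemeasurable_of_map_neZero (by rw [hX]; infer_instance)
  have hsum := (hindep.comp (fun _ x ↦ x ^ 2) fun _ ↦ by fun_prop).mgf_sum₀
    (fun i ↦ (hXm i).pow_const 2) Finset.univ (t := t)
  simp only [Finset.sum_fn, Function.comp_def] at hsum
  rw [hsum, Finset.prod_congr rfl fun i _ ↦ mgf_sq_of_map_eq_gaussianReal (hX i) ht]
  simp

lemma iIndepFun.mgf_sum_sq_gaussianReal_le (hindep : iIndepFun X μ)
    (hX : ∀ i, μ.map (X i) = gaussianReal 0 v) (ht : t * v ≤ 1 / 4) :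
    mgf (fun ω ↦ ∑ i, X i ω ^ 2) μ t
      ≤ exp (t * (Fintype.card ι * v) + 4 * Fintype.card ι * v ^ 2 * t ^ 2) :=
  calc mgf (fun ω ↦ ∑ i, X i ω ^ 2) μ t = (√(1 - 2 * (t * v)))⁻¹ ^ Fintype.card ι := by
        rw [hindep.mgf_sum_sq_gaussianReal hX (by linarith), mul_assoc]
    _ ≤ exp (t * v + 4 * (t * v) ^ 2) ^ Fintype.card ι := by
        gcongr
        exact inv_sqrt_one_sub_two_mul_le_exp ht
    _ = _ := by rw [← exp_nat_mul]; ring_nf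

lemma iIndepFun.integrable_exp_mul_sum_sq_gaussianReal (hindep : iIndepFun X μ)
    (hX : ∀ i, μ.map (X i) = gaussianReal 0 v) (ht : 2 * t * v < 1) :
    Integrable (fun ω ↦ exp (t * ∑ i, X i ω ^ 2)) μ := by
  have := hindep.isProbabilityMeasure
  refine mgf_pos_iff.1 ?_
  rw [hindep.mgf_sum_sq_gaussianReal hX ht]
  positivity

lemma iIndepFun.measureReal_le_abs_sum_sq_sub_gaussianReal_le (hindep : iIndepFun X μ)
    (hX : ∀ i, μ.map (X i) = gaussianReal 0 v) {a : ℝ} (ht : 0 ≤ t) (htv : t * v ≤ 1 / 4) :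
    μ.real {ω | a ≤ |∑ i, X i ω ^ 2 - Fintype.card ι * v|}
      ≤ 2 * exp (-t * a + 4 * Fintype.card ι * v ^ 2 * t ^ 2) := by
  have := hindep.isProbabilityMeasure
  have hv : (0 : ℝ) ≤ v := v.2
  have hneg : -t * v ≤ 1 / 4 := by nlinarith
  have hupper := measureReal_ge_add_le_exp_of_mgf_le (a := a) ht
    (hindep.integrable_exp_mul_sum_sq_gaussianReal hX (by linarith))
    (hindep.mgf_sum_sq_gaussianReal_le hX htv)
  have hlower := measureReal_le_sub_le_exp_of_mgf_le (m := Fintype.card ι * v)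
    (c := 4 * Fintype.card ι * v ^ 2) (a := a) ht
    (hindep.integrable_exp_mul_sum_sq_gaussianReal hX (by linarith))
    ((hindep.mgf_sum_sq_gaussianReal_le hX hneg).trans_eq (by ring_nf))
  have hsplit : {ω | a ≤ |∑ i, X i ω ^ 2 - Fintype.card ι * v|}
      ⊆ {ω | Fintype.card ι * v + a ≤ ∑ i, X i ω ^ 2}
        ∪ {ω | ∑ i, X i ω ^ 2 ≤ Fintype.card ι * v - a} := fun ω hω ↦ by
    simp only [Set.mem_ofPred_eq, Set.mem_union] at hω ⊢
    rcases le_abs'.1 hω with h | h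
    · exact Or.inr (by linarith)
    · exact Or.inl (by linarith)
  linarith [measureReal_mono hsplit (μ := μ), measureReal_union_le (μ := μ)
    {ω | Fintype.card ι * v + a ≤ ∑ i, X i ω ^ 2} {ω | ∑ i, X i ω ^ 2 ≤ Fintype.card ι * v - a}]

lemma iIndepFun.measureReal_le_abs_sum_sq_sub_gaussianReal_le_exp (hindep : iIndepFun X μ)
    (hX : ∀ i, μ.map (X i) = gaussianReal 0 v) (hv : 0 < v) {ε : ℝ} (hε : 0 < ε)
    (hεn : ε ≤ 2 * √(Fintype.card ι)) :
    μ.real {ω | v * ε * √(Fintype.card ι) ≤ |∑ i, X i ω ^ 2 - Fintype.card ι * v|}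
      ≤ 2 * exp (-ε ^ 2 / 16) := by
  set n := Fintype.card ι
  have hn : 0 < √n := by linarith
  have hsq : √n ^ 2 = n := sq_sqrt (Nat.cast_nonneg n)
  have hv' : (0 : ℝ) < v := hv
  convert hindep.measureReal_le_abs_sum_sq_sub_gaussianReal_le hX
    (t := ε / (8 * v * √n)) (by positivity) ?_ using 3
  · field_simp
    rw [hsq]
    ring
  · rw [div_mul_eq_mul_div, div_le_iff₀ (by positivity)]
    nlinarith

end SumOfSquares

end ProbabilityTheory

theorem gaussian_annulus_concentration_general
    (n : ℕ) (σ : ℝ) (hσ : 0 < σ)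
    (Ω : Type*) [MeasureSpace Ω] [IsProbabilityMeasure (ℙ : Measure Ω)]
    (Z : Ω → EuclideanSpace ℝ (Fin n))
    (hdist : ∀ i : Fin n,
      Measure.map (fun ω => Z ω i) ℙ = gaussianReal 0 ⟨σ ^ 2, sq_nonneg σ⟩)
    (hindep : iIndepFun (fun i ω => Z ω i) ℙ) :
    ∀ ε : ℝ, 0 ≤ ε → ε ≤ Real.sqrt n →
      1 - 2 * Real.exp (-ε ^ 2 / 16) ≤
        (ℙ {ω | |‖Z ω‖ - σ * Real.sqrt n| ≤ σ * ε}).toReal := by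
  intro ε hε hεn
  obtain rfl | hεpos := hε.eq_or_lt
  · exact (by norm_num : (1 : ℝ) - 2 * exp (-0 ^ 2 / 16) ≤ 0).trans ENNReal.toReal_nonneg
  have hsq : √n ^ 2 = n := sq_sqrt (Nat.cast_nonneg n)
  have htail := hindep.measureReal_le_abs_sum_sq_sub_gaussianReal_le_exp hdist
    (NNReal.coe_pos.1 (pow_pos hσ 2)) hεpos (by rw [Fintype.card_fin]; linarith [sqrt_nonneg n])
  have hbad : {ω | |‖Z ω‖ - σ * √n| ≤ σ * ε}ᶜ
      ⊆ {ω | σ ^ 2 * ε * √n ≤ |∑ i, Z ω i ^ 2 - n * σ ^ 2|} := by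
    intro ω hω
    simp only [Set.mem_compl_iff, Set.mem_ofPred_eq, not_le] at hω ⊢
    rw [← EuclideanSpace.real_norm_sq_eq, show σ ^ 2 * ε * √n = σ * √n * (σ * ε) by ring,
      show (n : ℝ) * σ ^ 2 = (σ * √n) ^ 2 by rw [mul_pow, hsq, mul_comm]]
    exact mul_le_abs_sq_sub_sq (norm_nonneg _) (by positivity) hω.le
  rw [Fintype.card_fin] at htail
  calc 1 - 2 * exp (-ε ^ 2 / 16) ≤ 1 - (ℙ : Measure Ω).real {ω | |‖Z ω‖ - σ * √n| ≤ σ * ε}ᶜ := by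
        linarith [(measureReal_mono hbad (μ := ℙ)).trans htail]
    _ ≤ _ := one_sub_probReal_compl_le _

/-- **Gaussian annulus concentration.** Let `Z` be a random vector in `ℝ^n` whose coordinates are
independent Gaussian random variables with mean `0` and variance `σ²`. Then for every
`0 ≤ ε ≤ √n`, `P[ |‖Z‖₂ − σ√n| ≤ σε ] ≥ 1 − 2 e^{−ε²/16}`. -/
theorem gaussian_annulus_concentration
    (n : ℕ) (σ : ℝ) (hσ : 0 < σ)
    (Ω : Type*) [MeasureSpace Ω] [IsProbabilityMeasure (ℙ : Measure Ω)]
    (Z : Ω → EuclideanSpace ℝ (Fin n))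
    (hmeas : ∀ i : Fin n, Measurable fun ω => Z ω i)
    (hdist : ∀ i : Fin n,
      Measure.map (fun ω => Z ω i) ℙ = gaussianReal 0 ⟨σ ^ 2, sq_nonneg σ⟩)
    (hindep : iIndepFun (fun i ω => Z ω i) ℙ) :
    ∀ ε : ℝ, 0 ≤ ε → ε ≤ Real.sqrt n →
      1 - 2 * Real.exp (-ε ^ 2 / 16) ≤
        (ℙ {ω | |‖Z ω‖ - σ * Real.sqrt n| ≤ σ * ε}).toReal :=
  gaussian_annulus_concentration_general n σ hσ Ω Z hdist hindep
end
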